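/- arXiv:1605.02991 — 3 statements merged into one kernel-verified Lean document; each statement's English description precedes it below -/
import Mathlib

section
/- If D is a symmetric 2x2 matrix of the form [[k_e*k_u*a + k_u^2*K_D*g^2, k_a*k_u*K_D*g], [k_a*k_u*K_D*g, k_e*k_a + k_a^2*K_D]] with k_e, k_a, K_D > 0, k_u < 0, a > 0, g ≠ 0, and k_u ≤ -(a/g^2)*(k_a + k_e/K_D) - ε for some ε > 0, then det(D) > 0 and the (2,2) entry of D is positive, hence D is positive definite. -/
/-! Up to the positive factor `ke * ka`, the determinant of `D` is
`ku * (ke * a + ka * KD * a + ku * KD * g ^ 2)`. The gain condition, multiplied by `KD * g ^ 2`,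
makes the second factor at most `-ε * KD * g ^ 2 < 0`, so with `ku < 0` the determinant is positive.
A symmetric `2 × 2` matrix with positive determinant and positive lower-right entry is positive
definite. -/

open Matrix

/-- Completing the square: `r * (p x² + 2 q x y + r y²) = (q x + r y)² + (p r - q²) x²`. -/
theorem Matrix.posDef_fin_two_of {p q r : ℝ} (hr : 0 < r) (hdet : 0 < p * r - q ^ 2) :
    (!![p, q; q, r]).PosDef := by
  rw [posDef_iff_dotProduct_mulVec]
  refine ⟨by ext i j; fin_cases i <;> fin_cases j <;> rfl, fun x hx => ?_⟩
  have hquad : star x ⬝ᵥ (!![p, q; q, r] *ᵥ x)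
      = p * x 0 ^ 2 + 2 * q * x 0 * x 1 + r * x 1 ^ 2 := by
    simp only [star_trivial, dotProduct, mulVec, Fin.sum_univ_two, of_apply, cons_val',
      cons_val_zero, cons_val_one, empty_val', cons_val_fin_one]
    ring
  rw [hquad]
  rcases eq_or_ne (x 0) 0 with h0 | h0
  · have h1 : x 1 ≠ 0 := fun h1 => hx (by ext i; fin_cases i <;> assumption)
    rw [h0]
    nlinarith [sq_pos_of_ne_zero h1]
  · nlinarith [sq_nonneg (q * x 0 + r * x 1), mul_pos hdet (sq_pos_of_ne_zero h0)]

theorem stmt_0_general (ke ka KD ku a g ε : ℝ)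
    (hke : 0 < ke) (hka : 0 < ka) (hKD : 0 < KD) (hku : ku < 0)
    (hg : g ≠ 0) (hε : 0 < ε)
    (hcond : ku ≤ -(a / g ^ 2) * (ka + ke / KD) - ε)
    (D : Matrix (Fin 2) (Fin 2) ℝ)
    (hD : D = !![ke * ku * a + ku ^ 2 * KD * g ^ 2, ka * ku * KD * g;
                 ka * ku * KD * g, ke * ka + ka ^ 2 * KD]) :
    0 < D.det ∧ 0 < D 1 1 ∧ D.PosDef := by
  have hKDg : 0 < KD * g ^ 2 := by positivity
  have hfactor : ke * a + ka * KD * a + ku * KD * g ^ 2 < 0 := by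
    have hscaled := mul_le_mul_of_nonneg_right hcond hKDg.le
    have hexpand : (-(a / g ^ 2) * (ka + ke / KD) - ε) * (KD * g ^ 2)
        = -(ke * a + ka * KD * a) - ε * (KD * g ^ 2) := by
      field_simp
      ring
    nlinarith [mul_pos hε hKDg]
  have hdet : 0 < (ke * ku * a + ku ^ 2 * KD * g ^ 2) * (ke * ka + ka ^ 2 * KD)
      - (ka * ku * KD * g) ^ 2 := by
    have hsplit : (ke * ku * a + ku ^ 2 * KD * g ^ 2) * (ke * ka + ka ^ 2 * KD)
        - (ka * ku * KD * g) ^ 2 = ke * ka * (ku * (ke * a + ka * KD * a + ku * KD * g ^ 2)) := by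
      ring
    rw [hsplit]
    exact mul_pos (mul_pos hke hka) (mul_pos_of_neg_of_neg hku hfactor)
  have hcorner : 0 < ke * ka + ka ^ 2 * KD := by positivity
  subst hD
  refine ⟨?_, hcorner, posDef_fin_two_of hcorner hdet⟩
  rw [det_fin_two_of]
  linarith

theorem stmt_0 (ke ka KD ku a g ε : ℝ)
    (hke : 0 < ke) (hka : 0 < ka) (hKD : 0 < KD) (hku : ku < 0)
    (ha : 0 < a) (hg : g ≠ 0) (hε : 0 < ε)
    (hcond : ku ≤ -(a / g ^ 2) * (ka + ke / KD) - ε)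
    (D : Matrix (Fin 2) (Fin 2) ℝ)
    (hD : D = !![ke * ku * a + ku ^ 2 * KD * g ^ 2, ka * ku * KD * g;
                 ka * ku * KD * g, ke * ka + ka ^ 2 * KD]) :
    0 < D.det ∧ 0 < D 1 1 ∧ D.PosDef :=
  stmt_0_general ke ka KD ku a g ε hke hka hKD hku hg hε hcond D hD
end

section
/- Let ỹ(t) be smooth, H_a, H_u differentiable along trajectories with dH_a/dt = u y_a and dH_u/dt = u y_u, and ỹ = k_a y_a + k_u y_u. If u satisfies k_e u = −(K_P ỹ + K_I ∫₀ᵗ ỹ ds + K_D dỹ/dt), then W = k_e(k_a H_a + k_u H_u) + (K_I/2)(∫₀ᵗ ỹ ds)² + (K_D/2) ỹ² satisfies dW/dt = −K_P ỹ² ≤ 0. -/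
/-- Lyapunov decrease under the PID around a weighted sum of passive outputs:
dW/dt = −K_P ỹ² ≤ 0. -/
theorem stmt_15 (Ha Hu ya yu ytil u : ℝ → ℝ) (ke ka ku KP KI KD : ℝ)
    (hKP : 0 < KP) (hKI : 0 < KI) (hKD : 0 < KD)
    (hya : Continuous ya) (hyu : Continuous yu)
    (hytil : ∀ t, ytil t = ka * ya t + ku * yu t)
    (hytild : Differentiable ℝ ytil)
    (hHa : ∀ t, HasDerivAt Ha (u t * ya t) t)
    (hHu : ∀ t, HasDerivAt Hu (u t * yu t) t)
    (hpid : ∀ t, ke * u t =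
      -(KP * ytil t + KI * (∫ s in (0:ℝ)..t, ytil s) + KD * deriv ytil t))
    (W : ℝ → ℝ)
    (hW : ∀ t, W t = ke * (ka * Ha t + ku * Hu t)
        + KI / 2 * (∫ s in (0:ℝ)..t, ytil s) ^ 2 + KD / 2 * (ytil t) ^ 2) :
    ∀ t, HasDerivAt W (-(KP * (ytil t) ^ 2)) t ∧ -(KP * (ytil t) ^ 2) ≤ 0 := by
  intro t
  constructor
  · have hWfun : W = fun t => ke * (ka * Ha t + ku * Hu t)
        + KI / 2 * (∫ s in (0:ℝ)..t, ytil s) ^ 2 + KD / 2 * (ytil t) ^ 2 :=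
      funext hW
    have hF : HasDerivAt (fun t => ∫ s in (0:ℝ)..t, ytil s) (ytil t) t :=
      (hytild.continuous.integral_hasStrictDerivAt 0 t).hasDerivAt
    have hyd : HasDerivAt ytil (deriv ytil t) t :=
      (hytild t).hasDerivAt
    have hD : HasDerivAt (fun t => ke * (ka * Ha t + ku * Hu t)
        + KI / 2 * (∫ s in (0:ℝ)..t, ytil s) ^ 2 + KD / 2 * (ytil t) ^ 2)
        (ke * (ka * (u t * ya t) + ku * (u t * yu t))
          + KI / 2 * (2 * (∫ s in (0:ℝ)..t, ytil s) ^ 1 * ytil t)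
          + KD / 2 * (2 * (ytil t) ^ 1 * deriv ytil t)) t := by
      exact ((((hHa t).const_mul ka).add ((hHu t).const_mul ku)).const_mul ke).add
        ((hF.pow 2).const_mul (KI / 2)) |>.add ((hyd.pow 2).const_mul (KD / 2))
    rw [hWfun]
    convert hD using 1
    linear_combination -(ytil t) * hpid t + ke * u t * hytil t
  · nlinarith [sq_nonneg (ytil t)]
end

section
/- Let V_d(θ, z) = k_e k_u V_θ(θ) + (K_I/2)(k_a z + k_u V_N(θ))² with V_θ, V_N smooth, V_θ'(0) = 0, V_N(0) = 0, V_θ''(0) < 0, k_e > 0, k_u < 0, K_I > 0, k_a ≠ 0. Then the Hessian of V_d at the origin is positive definite, so the origin is a strict local minimum of V_d. -/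
open Filter Set

lemma posDef_fin_two {A B C : ℝ} (hA : 0 < A) (hdet : 0 < A * C - B ^ 2) :
    (!![A, B; B, C] : Matrix (Fin 2) (Fin 2) ℝ).PosDef := by
  rw [Matrix.posDef_iff_dotProduct_mulVec]
  constructor
  · ext i j
    fin_cases i <;> fin_cases j <;>
      simp [Matrix.conjTranspose, Matrix.vecHead, Matrix.vecTail]
  · intro x hx
    have h01 : x 0 ≠ 0 ∨ x 1 ≠ 0 := by
      by_contra h
      push_neg at h
      exact hx (funext fun i => by fin_cases i <;> simp [h.1, h.2])
    have e00 : (!![A, B; B, C] : Matrix (Fin 2) (Fin 2) ℝ) 0 0 = A := by simp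
    have e01 : (!![A, B; B, C] : Matrix (Fin 2) (Fin 2) ℝ) 0 1 = B := by simp
    have e10 : (!![A, B; B, C] : Matrix (Fin 2) (Fin 2) ℝ) 1 0 = B := by simp
    have e11 : (!![A, B; B, C] : Matrix (Fin 2) (Fin 2) ℝ) 1 1 = C := by simp
    simp only [dotProduct, Matrix.mulVec, Fin.sum_univ_two, Pi.star_apply,
      star_trivial, e00, e01, e10, e11]
    rcases h01 with h | h
    · rcases eq_or_ne (x 1) 0 with h1 | h1
      · rw [h1]
        have := mul_pos (mul_self_pos.mpr h) hA
        nlinarith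
      · nlinarith [sq_nonneg (A * x 0 + B * x 1), mul_pos hdet (mul_self_pos.mpr h1), hA]
    · nlinarith [sq_nonneg (A * x 0 + B * x 1), mul_pos hdet (mul_self_pos.mpr h), hA]

lemma strict_max_1d {f : ℝ → ℝ} (hf : ContDiff ℝ (⊤ : ℕ∞) f) (h0 : deriv f 0 = 0)
    (h2 : deriv (deriv f) 0 < 0) :
    ∃ ε > 0, ∀ x : ℝ, x ≠ 0 → |x| < ε → f x < f 0 := by
  have hf' : ContDiff ℝ (⊤ : ℕ∞) f := hf.of_le (by simp)
  set g := deriv f with hg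
  have hgc : ContDiff ℝ (⊤ : ℕ∞) g := (contDiff_infty_iff_deriv.mp hf').2
  have hgd : HasDerivAt g (deriv g 0) 0 :=
    (hgc.differentiable (by simp) 0).hasDerivAt
  have hslope : Tendsto (slope g 0) (nhdsWithin 0 {(0:ℝ)}ᶜ) (nhds (deriv g 0)) :=
    hasDerivAt_iff_tendsto_slope.mp hgd
  have hev : ∀ᶠ x in nhdsWithin 0 {(0:ℝ)}ᶜ, slope g 0 x < 0 :=
    hslope.eventually_lt_const h2
  obtain ⟨ε, hε, hball⟩ := Metric.mem_nhdsWithin_iff.mp hev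
  refine ⟨ε, hε, fun x hx hxε => ?_⟩
  have hcont : Continuous f := hf.continuous
  have hkey : ∀ y : ℝ, y ≠ 0 → |y| < ε → (g y) / y < 0 := by
    intro y hy hyε
    have hmem : y ∈ Metric.ball (0:ℝ) ε ∩ {(0:ℝ)}ᶜ :=
      ⟨by simpa [Real.dist_eq] using hyε, by simpa using hy⟩
    have := hball hmem
    simpa [slope_def_field, h0, div_eq_inv_mul] using this
  rcases lt_or_gt_of_ne hx with hneg | hpos
  · have hmono : StrictMonoOn f (Icc x 0) := by
      apply strictMonoOn_of_deriv_pos (convex_Icc x 0) (hcont.continuousOn)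
      intro y hy
      rw [interior_Icc] at hy
      have hy0 : y ≠ 0 := ne_of_lt hy.2
      have hyε : |y| < ε := by
        rw [abs_of_neg hy.2]
        rw [abs_of_neg hneg] at hxε
        linarith [hy.1]
      have hq := hkey y hy0 hyε
      have hyneg : y < 0 := hy.2
      rcases div_neg_iff.mp hq with ⟨h1, h2⟩ | ⟨h1, h2⟩ <;> linarith
    exact hmono ⟨le_refl x, le_of_lt hneg⟩ ⟨le_of_lt hneg, le_refl 0⟩ hneg
  · have hanti : StrictAntiOn f (Icc 0 x) := by
      apply strictAntiOn_of_deriv_neg (convex_Icc 0 x) (hcont.continuousOn)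
      intro y hy
      rw [interior_Icc] at hy
      have hy0 : y ≠ 0 := (ne_of_gt hy.1)
      have hyε : |y| < ε := by
        rw [abs_of_pos hy.1]
        calc y < x := hy.2
        _ ≤ |x| := le_abs_self x
        _ < ε := hxε
      have hq := hkey y hy0 hyε
      rcases div_neg_iff.mp hq with ⟨h1, h2⟩ | ⟨h1, h2⟩ <;> linarith [hy.1]
    exact hanti ⟨le_refl 0, le_of_lt hpos⟩ ⟨le_of_lt hpos, le_refl x⟩ hpos

/-- The Hessian of V_d at the origin is positive definite, so the origin is
a strict local minimum of the desired potential energy. -/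
theorem stmt_18 (Vθ VN : ℝ → ℝ) (ke ku ka KI : ℝ)
    (hVθ : ContDiff ℝ (⊤ : ℕ∞) Vθ) (hVN : ContDiff ℝ (⊤ : ℕ∞) VN)
    (hVθ0 : deriv Vθ 0 = 0) (hVN0 : VN 0 = 0)
    (hVθ'' : deriv (deriv Vθ) 0 < 0)
    (hke : 0 < ke) (hku : ku < 0) (hKI : 0 < KI) (hka : ka ≠ 0)
    (Vd : ℝ × ℝ → ℝ)
    (hVd : ∀ p : ℝ × ℝ, Vd p = ke * ku * Vθ p.1
        + KI / 2 * (ka * p.2 + ku * VN p.1) ^ 2) :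
    (!![deriv (fun a => deriv (fun a' => Vd (a', 0)) a) 0,
        deriv (fun a => deriv (fun b => Vd (a, b)) 0) 0;
        deriv (fun a => deriv (fun b => Vd (a, b)) 0) 0,
        deriv (fun b => deriv (fun b' => Vd (0, b')) b) 0] :
      Matrix (Fin 2) (Fin 2) ℝ).PosDef ∧
    ∀ᶠ p in nhdsWithin ((0, 0) : ℝ × ℝ) {(0, 0)}ᶜ, Vd (0, 0) < Vd p := by
  have hVθi : ContDiff ℝ (⊤ : ℕ∞) Vθ := hVθ.of_le (by simp)
  have hVNi : ContDiff ℝ (⊤ : ℕ∞) VN := hVN.of_le (by simp)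
  have hVθd : Differentiable ℝ Vθ := hVθi.differentiable (by simp)
  have hVNd : Differentiable ℝ VN := hVNi.differentiable (by simp)
  have hdVθd : Differentiable ℝ (deriv Vθ) :=
    (contDiff_infty_iff_deriv.mp hVθi).2.differentiable (by simp)
  have hdVNd : Differentiable ℝ (deriv VN) :=
    (contDiff_infty_iff_deriv.mp hVNi).2.differentiable (by simp)
  set b := deriv VN 0 with hb
  set D := deriv (deriv Vθ) 0 with hD
  have hkeku : ke * ku < 0 := mul_neg_of_pos_of_neg hke hku
  -- entry (0,0)
  have inner1 : ∀ a : ℝ, deriv (fun a' => Vd (a', 0)) a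
      = ke * ku * deriv Vθ a + KI * ((ku * VN a) * (ku * deriv VN a)) := by
    intro a
    have hfun : (fun a' => Vd (a', 0))
        = fun a' => ke * ku * Vθ a' + KI / 2 * (ka * 0 + ku * VN a') ^ 2 :=
      funext fun a' => hVd _
    rw [hfun]
    have H := ((hVθd a).hasDerivAt.const_mul (ke * ku)).add
      ((((((hVNd a).hasDerivAt.const_mul ku).const_add (ka * 0)).pow 2).const_mul (KI / 2)))
    erw [H.deriv]; ring
  have E11 : deriv (fun a => deriv (fun a' => Vd (a', 0)) a) 0
      = ke * ku * D + KI * (ku * b) ^ 2 := by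
    have hfun : (fun a => deriv (fun a' => Vd (a', 0)) a)
        = fun a => ke * ku * deriv Vθ a + KI * ((ku * VN a) * (ku * deriv VN a)) :=
      funext inner1
    rw [hfun]
    have H := ((hdVθd 0).hasDerivAt.const_mul (ke * ku)).add
      ((((hVNd 0).hasDerivAt.const_mul ku).mul
        ((hdVNd 0).hasDerivAt.const_mul ku)).const_mul KI)
    erw [H.deriv, hVN0]; ring
  -- entry (0,1)
  have inner2 : ∀ a : ℝ, deriv (fun bb => Vd (a, bb)) 0
      = KI * ka * (ka * 0 + ku * VN a) := by
    intro a
    have hfun : (fun bb => Vd (a, bb))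
        = fun bb => ke * ku * Vθ a + KI / 2 * (ka * bb + ku * VN a) ^ 2 :=
      funext fun bb => hVd _
    rw [hfun]
    have H := (((((hasDerivAt_id' (0:ℝ)).const_mul ka).add_const (ku * VN a)).pow 2).const_mul
      (KI / 2)).const_add (ke * ku * Vθ a)
    erw [H.deriv]; ring
  have E12 : deriv (fun a => deriv (fun bb => Vd (a, bb)) 0) 0 = KI * ka * (ku * b) := by
    have hfun : (fun a => deriv (fun bb => Vd (a, bb)) 0)
        = fun a => KI * ka * (ka * 0 + ku * VN a) := funext inner2
    rw [hfun]
    have H := ((((hVNd 0).hasDerivAt.const_mul ku).const_add (ka * 0)).const_mul (KI * ka))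
    erw [H.deriv]
  -- entry (1,1)
  have inner3 : ∀ bb : ℝ, deriv (fun b' => Vd (0, b')) bb
      = KI * ka * (ka * bb + ku * VN 0) := by
    intro bb
    have hfun : (fun b' => Vd (0, b'))
        = fun b' => ke * ku * Vθ 0 + KI / 2 * (ka * b' + ku * VN 0) ^ 2 :=
      funext fun b' => hVd _
    rw [hfun]
    have H := (((((hasDerivAt_id' bb).const_mul ka).add_const (ku * VN 0)).pow 2).const_mul
      (KI / 2)).const_add (ke * ku * Vθ 0)
    erw [H.deriv]; ring
  have E22 : deriv (fun bb => deriv (fun b' => Vd (0, b')) bb) 0 = KI * ka ^ 2 := by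
    have hfun : (fun bb => deriv (fun b' => Vd (0, b')) bb)
        = fun bb => KI * ka * (ka * bb + ku * VN 0) := funext inner3
    rw [hfun]
    have H := ((((hasDerivAt_id' (0:ℝ)).const_mul ka).add_const (ku * VN 0)).const_mul (KI * ka))
    erw [H.deriv]; ring
  have hka2 : 0 < ka ^ 2 := by positivity
  have hApos : 0 < ke * ku * D + KI * (ku * b) ^ 2 := by
    have h1 : 0 < ke * ku * D := mul_pos_of_neg_of_neg hkeku hVθ''
    nlinarith [sq_nonneg (ku * b), hKI.le]
  constructor
  · rw [E11, E12, E22]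
    apply posDef_fin_two hApos
    have hdet : (ke * ku * D + KI * (ku * b) ^ 2) * (KI * ka ^ 2) - (KI * ka * (ku * b)) ^ 2
        = (ke * ku * D) * (KI * ka ^ 2) := by ring
    rw [hdet]
    exact mul_pos (mul_pos_of_neg_of_neg hkeku hVθ'') (mul_pos hKI hka2)
  · obtain ⟨ε, hε, hmax⟩ := strict_max_1d hVθ hVθ0 hVθ''
    have hmem : Metric.ball ((0, 0) : ℝ × ℝ) ε ∩ {((0, 0) : ℝ × ℝ)}ᶜ
        ∈ nhdsWithin ((0, 0) : ℝ × ℝ) {(0, 0)}ᶜ :=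
      inter_mem (nhdsWithin_le_nhds (Metric.ball_mem_nhds _ hε)) self_mem_nhdsWithin
    filter_upwards [hmem] with p hp
    have hpne : p ≠ (0, 0) := by simpa using hp.2
    have h1 : |p.1| < ε := by
      have hle : dist p.1 (0:ℝ) ≤ dist p ((0, 0) : ℝ × ℝ) := by
        rw [Prod.dist_eq]; exact le_max_left _ _
      have := hle.trans_lt hp.1
      simpa [Real.dist_eq] using this
    rw [hVd p, hVd (0, 0)]
    simp only [hVN0]
    rcases eq_or_ne p.1 0 with hx0 | hx0
    · have hy : p.2 ≠ 0 := fun hy0 => hpne (Prod.ext hx0 hy0)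
      rw [hx0, hVN0]
      have : 0 < KI / 2 * (ka * p.2) ^ 2 := by positivity
      nlinarith
    · have hVlt : Vθ p.1 < Vθ 0 := hmax p.1 hx0 h1
      have h2 : 0 < ke * ku * (Vθ p.1 - Vθ 0) :=
        mul_pos_of_neg_of_neg hkeku (by linarith)
      nlinarith [sq_nonneg (ka * p.2 + ku * VN p.1), hKI.le]
end
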